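/- In the symmetrized sum Σ_{σ∈S_4} σ[ (z_1-q^{-1}w)(z_2-q^{-1}w)(z_3-q^{-1}w)(z_4-q^{-1}w) + [4]_2 (w-q^{-1}z_1)(z_2-q^{-1}w)(z_3-q^{-1}w)(z_4-q^{-1}w) + [4 choose 2]_2 (w-q^{-1}z_1)(w-q^{-1}z_2)(z_3-q^{-1}w)(z_4-q^{-1}w) + [4]_2 (w-q^{-1}z_1)(w-q^{-1}z_2)(w-q^{-1}z_3)(z_4-q^{-1}w) + (w-q^{-1}z_1)(w-q^{-1}z_2)(w-q^{-1}z_3)(w-q^{-1}z_4) ], the coefficients of w^0 and w^4 both vanish. -/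

import Mathlib

/-!
The symmetrization plays no role: both extreme coefficients already vanish for the summand
itself. Every factor is linear in `w`, so the coefficient of `w⁴` is the product of the leading
coefficients and that of `w⁰` the product of the constant terms. With `t = q⁻¹ = q₂⁻³` both equal
(the second up to the factor `z₁z₂z₃z₄`) `1 - [4]t + [4 choose 2]t² - [4]t³ + t⁴`, which by the
Gaussian binomial theorem is `(1 - q₂³t)(1 - q₂t)(1 - q₂⁻¹t)(1 - q₂⁻³t)` and so vanishes at
`t = q₂⁻³`.
-/

noncomputable section

/-- The field ℚ(q^{1/3}) of rational functions in the indeterminate q₂ = q^{1/3}. -/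
abbrev Kq : Type := RatFunc ℚ

/-- The indeterminate q₂ = q^{1/3}, so that q = q₂³. -/
def q2 : Kq := RatFunc.X

/-- The q₂-integer [n]₂ = (q₂ⁿ - q₂⁻ⁿ)/(q₂ - q₂⁻¹). -/
def qInt2 (n : ℤ) : Kq := (q2 ^ n - q2 ^ (-n)) / (q2 - q2⁻¹)

/-- The polynomial ring ℚ(q^{1/3})[z₁,z₂,z₃,z₄][w]. -/
abbrev Rz : Type := Polynomial (MvPolynomial (Fin 4) Kq)

/-- Inclusion of scalars. -/
def cK (a : Kq) : Rz := Polynomial.C (MvPolynomial.C a)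

/-- The variable w. -/
def w : Rz := Polynomial.X

/-- The variables z₁,…,z₄ (indexed by 0,…,3). -/
def z (i : Fin 4) : Rz := Polynomial.C (MvPolynomial.X i)

/-- The scalar q⁻¹ = q₂⁻³. -/
def qinv : Rz := cK (q2 ^ (-3 : ℤ))

/-- The action of σ ∈ S₄ permuting z₁,…,z₄. -/
def permAct (σ : Equiv.Perm (Fin 4)) (p : Rz) : Rz :=
  Polynomial.map (MvPolynomial.rename σ).toRingHom p

/-- The five-term Serre summand
(z₁-q⁻¹w)(z₂-q⁻¹w)(z₃-q⁻¹w)(z₄-q⁻¹w) + [4]₂ (w-q⁻¹z₁)(z₂-q⁻¹w)(z₃-q⁻¹w)(z₄-q⁻¹w)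
 + ([4]₂[3]₂/[2]₂) (w-q⁻¹z₁)(w-q⁻¹z₂)(z₃-q⁻¹w)(z₄-q⁻¹w)
 + [4]₂ (w-q⁻¹z₁)(w-q⁻¹z₂)(w-q⁻¹z₃)(z₄-q⁻¹w) + (w-q⁻¹z₁)(w-q⁻¹z₂)(w-q⁻¹z₃)(w-q⁻¹z₄). -/
def serreTerm : Rz :=
  (z 0 - qinv * w) * (z 1 - qinv * w) * (z 2 - qinv * w) * (z 3 - qinv * w)
  + cK (qInt2 4) *
      ((w - qinv * z 0) * (z 1 - qinv * w) * (z 2 - qinv * w) * (z 3 - qinv * w))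
  + cK (qInt2 4 * qInt2 3 / qInt2 2) *
      ((w - qinv * z 0) * (w - qinv * z 1) * (z 2 - qinv * w) * (z 3 - qinv * w))
  + cK (qInt2 4) *
      ((w - qinv * z 0) * (w - qinv * z 1) * (w - qinv * z 2) * (z 3 - qinv * w))
  + (w - qinv * z 0) * (w - qinv * z 1) * (w - qinv * z 2) * (w - qinv * z 3)

lemma q2_ne_zero : q2 ≠ 0 := RatFunc.X_ne_zero

lemma q2_pow_ne_C {n : ℕ} (hn : 0 < n) (c : ℚ) : q2 ^ n ≠ RatFunc.C c := by
  intro h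
  apply Polynomial.X_pow_sub_C_ne_zero hn c
  apply RatFunc.algebraMap_injective ℚ
  rw [map_sub, map_pow, RatFunc.algebraMap_X, RatFunc.algebraMap_C, map_zero, sub_eq_zero]
  exact h

lemma q2_sub_inv_ne_zero : q2 - q2⁻¹ ≠ 0 := by
  intro h
  apply q2_pow_ne_C two_pos 1
  calc q2 ^ 2 = q2 * q2⁻¹ := by rw [sq, ← sub_eq_zero.mp h]
    _ = RatFunc.C 1 := by rw [mul_inv_cancel₀ q2_ne_zero, map_one]

lemma q2_add_inv_ne_zero : q2 + q2⁻¹ ≠ 0 := by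
  intro h
  apply q2_pow_ne_C two_pos (-1)
  calc q2 ^ 2 = -(q2 * q2⁻¹) := by rw [eq_neg_of_add_eq_zero_right h]; ring
    _ = RatFunc.C (-1) := by rw [mul_inv_cancel₀ q2_ne_zero, map_neg, map_one]

lemma qInt2_two : qInt2 2 = q2 + q2⁻¹ := by
  rw [qInt2, div_eq_iff q2_sub_inv_ne_zero, zpow_neg, zpow_ofNat, ← inv_pow]
  ring

lemma qInt2_three : qInt2 3 = q2 ^ 2 + 1 + q2⁻¹ ^ 2 := by
  rw [qInt2, div_eq_iff q2_sub_inv_ne_zero, zpow_neg, zpow_ofNat, ← inv_pow]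
  field_simp [q2_ne_zero]
  ring

lemma qInt2_four : qInt2 4 = q2 ^ 3 + q2 + q2⁻¹ + q2⁻¹ ^ 3 := by
  rw [qInt2, div_eq_iff q2_sub_inv_ne_zero, zpow_neg, zpow_ofNat, ← inv_pow]
  field_simp [q2_ne_zero]
  ring

lemma qBinom2_four_two : qInt2 4 * qInt2 3 / qInt2 2 = (q2 ^ 2 + q2⁻¹ ^ 2) * qInt2 3 := by
  rw [div_eq_iff (qInt2_two ▸ q2_add_inv_ne_zero), qInt2_two, qInt2_four]
  field_simp [q2_ne_zero]
  ring

lemma gaussian_binomial_four (t : Kq) :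
    1 - qInt2 4 * t + qInt2 4 * qInt2 3 / qInt2 2 * t ^ 2 - qInt2 4 * t ^ 3 + t ^ 4
      = (1 - q2 ^ 3 * t) * (1 - q2 * t) * (1 - q2⁻¹ * t) * (1 - q2⁻¹ ^ 3 * t) := by
  rw [qBinom2_four_two, qInt2_three, qInt2_four]
  field_simp [q2_ne_zero]
  ring

lemma serre_scalar_eq_zero :
    1 - qInt2 4 * q2 ^ (-3 : ℤ) + qInt2 4 * qInt2 3 / qInt2 2 * (q2 ^ (-3 : ℤ)) ^ 2
      - qInt2 4 * (q2 ^ (-3 : ℤ)) ^ 3 + (q2 ^ (-3 : ℤ)) ^ 4 = 0 := by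
  rw [gaussian_binomial_four, zpow_neg, zpow_ofNat, mul_inv_cancel₀ (pow_ne_zero 3 q2_ne_zero),
    sub_self, zero_mul, zero_mul, zero_mul]

section LinearFactors

open Polynomial

variable {R : Type*} [CommRing R]

lemma coeff_zero_mul_four_linear (a₀ a₁ a₂ a₃ b₀ b₁ b₂ b₃ : R) :
    ((C a₀ * X + C b₀) * (C a₁ * X + C b₁) * (C a₂ * X + C b₂) * (C a₃ * X + C b₃)).coeff 0
      = b₀ * b₁ * b₂ * b₃ := by
  simp only [mul_coeff_zero, coeff_add, coeff_C_zero, coeff_X_zero, mul_zero, zero_add]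

lemma coeff_four_mul_four_linear (a₀ a₁ a₂ a₃ b₀ b₁ b₂ b₃ : R) :
    ((C a₀ * X + C b₀) * (C a₁ * X + C b₁) * (C a₂ * X + C b₂) * (C a₃ * X + C b₃)).coeff 4
      = a₀ * a₁ * a₂ * a₃ := by
  have h := coeff_prod_of_natDegree_le (s := Finset.univ)
    (fun i : Fin 4 => C (![a₀, a₁, a₂, a₃] i) * X + C (![b₀, b₁, b₂, b₃] i)) 1
    (fun i _ => natDegree_linear_le)
  simpa [Fin.prod_univ_four] using h

end LinearFactors

open Polynomial in
lemma z_sub_qinv_mul_w (i : Fin 4) :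
    z i - qinv * w = C (-MvPolynomial.C (q2 ^ (-3 : ℤ))) * X + C (MvPolynomial.X i) := by
  simp only [z, qinv, w, cK, map_neg]
  ring

open Polynomial in
lemma w_sub_qinv_mul_z (i : Fin 4) :
    w - qinv * z i = C 1 * X + C (-(MvPolynomial.C (q2 ^ (-3 : ℤ)) * MvPolynomial.X i)) := by
  simp only [z, qinv, w, cK, map_neg, map_mul, map_one]
  ring

lemma C_serre_scalar_eq_zero :
    let u : MvPolynomial (Fin 4) Kq := MvPolynomial.C (q2 ^ (-3 : ℤ))
    1 - MvPolynomial.C (qInt2 4) * u + MvPolynomial.C (qInt2 4 * qInt2 3 / qInt2 2) * u ^ 2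
      - MvPolynomial.C (qInt2 4) * u ^ 3 + u ^ 4 = 0 := by
  simpa only [map_add, map_sub, map_mul, map_pow, map_one, map_zero]
    using congrArg (MvPolynomial.C (σ := Fin 4)) serre_scalar_eq_zero

lemma coeff_zero_serreTerm : serreTerm.coeff 0 = 0 := by
  simp only [serreTerm, z_sub_qinv_mul_w, w_sub_qinv_mul_z, cK, Polynomial.coeff_add,
    Polynomial.coeff_C_mul, coeff_zero_mul_four_linear]
  linear_combination (MvPolynomial.X 0 * MvPolynomial.X 1 * MvPolynomial.X 2 * MvPolynomial.X 3
    : MvPolynomial (Fin 4) Kq) * C_serre_scalar_eq_zero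

lemma coeff_four_serreTerm : serreTerm.coeff 4 = 0 := by
  simp only [serreTerm, z_sub_qinv_mul_w, w_sub_qinv_mul_z, cK, Polynomial.coeff_add,
    Polynomial.coeff_C_mul, coeff_four_mul_four_linear]
  linear_combination C_serre_scalar_eq_zero

lemma coeff_sum_permAct (p : Rz) (n : ℕ) :
    (∑ σ : Equiv.Perm (Fin 4), permAct σ p).coeff n
      = ∑ σ : Equiv.Perm (Fin 4), MvPolynomial.rename σ (p.coeff n) := by
  simp only [Polynomial.finsetSum_coeff, permAct, Polynomial.coeff_map]
  rfl

/-- In the symmetrized sum Σ_{σ∈S₄} σ[ … ] of the five-term Serre expression, the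
coefficients of w⁰ and w⁴ both vanish. -/
theorem serre_extreme_coefficients_vanish :
    Polynomial.coeff (∑ σ : Equiv.Perm (Fin 4), permAct σ serreTerm) 0 = 0 ∧
    Polynomial.coeff (∑ σ : Equiv.Perm (Fin 4), permAct σ serreTerm) 4 = 0 := by
  simp only [coeff_sum_permAct, coeff_zero_serreTerm, coeff_four_serreTerm, map_zero,
    Finset.sum_const_zero, and_self]
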